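/- For every set-valued tableau T of partition shape, the tableau T_max is a key; that is, T_max is a semistandard Young tableau of partition shape in which every entry of column j also appears in column j−1. -/

import Mathlib

/-- `S ⋆ m`: replace the largest element of `S` that is `≤ m` by `m`,
or insert `m` if no such element exists. -/
def starOne (S : Finset ℕ) (m : ℕ) : Finset ℕ :=
  if h : (S.filter (fun x => x ≤ m)).Nonempty then
    insert m (S.erase ((S.filter (fun x => x ≤ m)).max' h))
  else insert m S

/-- `S ⋆ w` for a word `w`. -/
def starWord (S : Finset ℕ) (w : List ℕ) : Finset ℕ := w.foldl starOne S

/-- A semistandard Young tableau filling, encoded by its list of columns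
(left to right), each column listed top to bottom: columns strictly
increase downwards, column lengths weakly decrease (partition shape), and
rows weakly increase to the right. -/
def IsSSYTFill (P : List (List ℕ)) : Prop :=
  (∀ c ∈ P, List.Chain' (· < ·) c) ∧
  List.Chain' (fun c d => d.length ≤ c.length ∧
    ∀ r, r < d.length → c.getD r 0 ≤ d.getD r 0) P

/-- The column word of an SSYT filling: columns left to right, each read
bottom to top. -/
def fillWord (P : List (List ℕ)) : List ℕ := (P.map List.reverse).flatten

/-- `P` is obtained from the set-valued filling `T` by choosing one element
in each cell. -/
def IsChoice (P : List (List ℕ)) (T : List (List (Finset ℕ))) : Prop :=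
  List.Forall₂ (List.Forall₂ (· ∈ ·)) P T

/-- A set-valued tableau: all cells are nonempty finite sets, and every
choice of one element per cell yields an SSYT. -/
def IsSVT (T : List (List (Finset ℕ))) : Prop :=
  (∀ c ∈ T, ∀ S ∈ c, S.Nonempty) ∧
  ∀ P, IsChoice P T → IsSSYTFill P

/-- The word of a cell: its elements listed increasingly. -/
def cellWord (S : Finset ℕ) : List ℕ := S.sort (· ≤ ·)

/-- The column word of a set-valued tableau. -/
def svtWord (T : List (List (Finset ℕ))) : List ℕ :=
  (T.map (fun c => (c.reverse.map cellWord).flatten)).flatten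

/-- Column `j` (0-indexed) of the right key `K₊(T)` of a set-valued tableau,
computed as `∅ ⋆ word(T_{≥ j})`. -/
def svtKeyCol (T : List (List (Finset ℕ))) (j : ℕ) : Finset ℕ :=
  starWord ∅ (svtWord (T.drop j))

/-- Column `j` (0-indexed) of the key `key(α)` of a weak composition `α`:
the set of rows `r` with `α r > j`. -/
def keyCol (α : ℕ →₀ ℕ) (j : ℕ) : Finset ℕ :=
  α.support.filter (fun r => j < α r)

/-- The `k`-th smallest element of a finite set (0 for out of range `k`). -/
def ithSmall (A : Finset ℕ) (k : ℕ) : ℕ := (A.sort (· ≤ ·)).getD k 0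

/-- Entrywise comparison of two columns (as sets of equal size). -/
def colLE (A B : Finset ℕ) : Prop :=
  A.card = B.card ∧ ∀ k, ithSmall A k ≤ ithSmall B k

/-- `T ∈ SVT(α)`: `T` is a set-valued tableau of the same shape as `key(α)`
with `K₊(T) ≤ key(α)` entrywise. -/
def InSVTset (α : ℕ →₀ ℕ) (T : List (List (Finset ℕ))) : Prop :=
  IsSVT T ∧ (∀ j, (T.getD j []).length = (keyCol α j).card) ∧
  ∀ j, colLE (svtKeyCol T j) (keyCol α j)

/-- The weight of a set-valued tableau: the number of occurrences of each letter. -/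
noncomputable def svtWt (T : List (List (Finset ℕ))) : ℕ →₀ ℕ :=
  ((svtWord T).map (fun i => Finsupp.single i 1)).sum

/-- The number of cells of a tableau. -/
def numCells (T : List (List (Finset ℕ))) : ℕ := (T.map List.length).sum

/-- The excess `ex(T) = |wt(T)| - #cells`. -/
def svtEx (T : List (List (Finset ℕ))) : ℕ := (svtWord T).length - numCells T

/-- `s_i α`: swap the `i`-th and `(i+1)`-th entries of a weak composition. -/
def swapComp (i : ℕ) (α : ℕ →₀ ℕ) : ℕ →₀ ℕ :=
  Finsupp.equivMapDomain (Equiv.swap i (i+1)) α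

/-!
Column `j` of `T_max` is `∅ ⋆ w(T_{≥ j})`. Since `⋆` is monotone in the starting set, column
`j + 1` is contained in `(∅ ⋆ w(T_j)) ⋆ w(T_{≥ j+1})`, which is column `j`; and nested columns,
each listed increasingly, form an SSYT, because the `k`-th smallest element of a set is at most
the `k`-th smallest element of any subset.

For the sizes, reading the first column of `T_{≥ j}` from `∅` inserts the maximum of each cell,
giving a set of the right size whose `r`-th smallest element is at most the maximum of cell `r`.
By the row condition that element is then at most every entry of cell `r` of the next column, so
reading the next column (bottom to top) only ever replaces elements, and afterwards the same bound
holds with respect to that column. Hence the size never changes again.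
-/

lemma getD_mem {α : Type*} {l : List α} {r : ℕ} {d : α} (hr : r < l.length) : l.getD r d ∈ l := by
  rw [List.getD_eq_getElem l d hr]
  exact List.getElem_mem hr

lemma lt_length_of_lt_length_getD {α : Type*} {T : List (List α)} {j r : ℕ}
    (hr : r < (T.getD j []).length) : j < T.length := by
  by_contra h
  rw [List.getD_eq_default _ _ (not_lt.mp h)] at hr
  exact Nat.not_lt_zero _ hr

section fill

variable {P : List (List ℕ)}

lemma IsSSYTFill.getD_lt_getD (hP : IsSSYTFill P) {j r r' : ℕ} (hrr' : r < r')
    (hr' : r' < (P.getD j []).length) : (P.getD j []).getD r 0 < (P.getD j []).getD r' 0 := by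
  have hj := lt_length_of_lt_length_getD hr'
  rw [List.getD_eq_getElem _ _ hj] at hr' ⊢
  have hcol := List.isChain_iff_pairwise.mp (hP.1 _ (List.getElem_mem hj))
  rw [List.getD_eq_getElem _ _ (hrr'.trans hr'), List.getD_eq_getElem _ _ hr']
  exact List.pairwise_iff_getElem.mp hcol r r' _ hr' hrr'

lemma IsSSYTFill.rel_getD_succ (hP : IsSSYTFill P) (j : ℕ) :
    (P.getD (j + 1) []).length ≤ (P.getD j []).length ∧
      ∀ r < (P.getD (j + 1) []).length, (P.getD j []).getD r 0 ≤ (P.getD (j + 1) []).getD r 0 := by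
  rcases lt_or_ge (j + 1) P.length with hj | hj
  · rw [List.getD_eq_getElem _ _ hj, List.getD_eq_getElem _ _ (Nat.lt_of_succ_lt hj)]
    exact hP.2.getElem j hj
  · rw [List.getD_eq_default _ _ hj]
    exact ⟨Nat.zero_le _, fun r hr => absurd hr (Nat.not_lt_zero r)⟩

end fill

def cell (T : List (List (Finset ℕ))) (j r : ℕ) : Finset ℕ := (T.getD j []).getD r ∅

def IsChoiceFun (T : List (List (Finset ℕ))) (g : ℕ → ℕ → ℕ) : Prop :=
  ∀ j r, r < (T.getD j []).length → g j r ∈ cell T j r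

def choiceFill (T : List (List (Finset ℕ))) (g : ℕ → ℕ → ℕ) : List (List ℕ) :=
  T.mapIdx fun j c => c.mapIdx fun r _ => g j r

section choice

variable {T : List (List (Finset ℕ))} {g : ℕ → ℕ → ℕ}

lemma length_getD_choiceFill (j : ℕ) :
    ((choiceFill T g).getD j []).length = (T.getD j []).length := by
  simp only [choiceFill, List.getD_eq_getElem?_getD, List.getElem?_mapIdx]
  cases T[j]? <;> simp

lemma getD_getD_choiceFill {j r : ℕ} (hr : r < (T.getD j []).length) :
    ((choiceFill T g).getD j []).getD r 0 = g j r := by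
  simp only [choiceFill, List.getD_eq_getElem?_getD, List.getElem?_mapIdx] at hr ⊢
  cases h : T[j]? with
  | none => simp [h] at hr
  | some c => simp_all

lemma isChoice_choiceFill (hg : IsChoiceFun T g) : IsChoice (choiceFill T g) T := by
  rw [IsChoice, choiceFill, List.forall₂_iff_get]
  refine ⟨List.length_mapIdx, fun j _ hj => ?_⟩
  simp only [List.get_eq_getElem, List.getElem_mapIdx]
  rw [List.forall₂_iff_get]
  refine ⟨List.length_mapIdx, fun r _ hr => ?_⟩
  simp only [List.get_eq_getElem, List.getElem_mapIdx]
  have := hg j r (by rwa [List.getD_eq_getElem _ _ hj])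
  rwa [cell, List.getD_eq_getElem _ _ hj, List.getD_eq_getElem _ _ hr] at this

lemma IsChoiceFun.update (hg : IsChoiceFun T g) {j r x : ℕ} (hx : x ∈ cell T j r) :
    IsChoiceFun T (Function.update g j (Function.update (g j) r x)) := by
  intro i s hs
  rcases eq_or_ne i j with rfl | hij
  · rcases eq_or_ne s r with rfl | hsr
    · simpa using hx
    · simpa [hsr] using hg i s hs
  · simpa [hij] using hg i s hs

lemma IsSVT.exists_isChoiceFun (hT : IsSVT T) : ∃ g, IsChoiceFun T g := by
  refine ⟨fun j r => Classical.epsilon (· ∈ cell T j r), fun j r hr => Classical.epsilon_spec ?_⟩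
  exact hT.1 _ (getD_mem (lt_length_of_lt_length_getD hr)) _ (getD_mem hr)

lemma IsSVT.lt_of_mem_cell (hT : IsSVT T) {j r r' x y : ℕ} (hrr' : r < r')
    (hr' : r' < (T.getD j []).length) (hx : x ∈ cell T j r) (hy : y ∈ cell T j r') : x < y := by
  obtain ⟨g, hg⟩ := hT.exists_isChoiceFun
  have hg' := (hg.update hx).update (x := y) (by simpa using hy)
  have := (hT.2 _ (isChoice_choiceFill hg')).getD_lt_getD hrr'
    (by rwa [length_getD_choiceFill])
  rwa [getD_getD_choiceFill (hrr'.trans hr'), getD_getD_choiceFill hr', Function.update_self,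
    Function.update_self, Function.update_of_ne hrr'.ne, Function.update_self,
    Function.update_self] at this

lemma IsSVT.length_getD_succ_le (hT : IsSVT T) (j : ℕ) :
    (T.getD (j + 1) []).length ≤ (T.getD j []).length := by
  obtain ⟨g, hg⟩ := hT.exists_isChoiceFun
  simpa only [length_getD_choiceFill] using ((hT.2 _ (isChoice_choiceFill hg)).rel_getD_succ j).1

lemma IsSVT.le_of_mem_cell_succ (hT : IsSVT T) {j r x y : ℕ}
    (hr : r < (T.getD (j + 1) []).length) (hx : x ∈ cell T j r) (hy : y ∈ cell T (j + 1) r) :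
    x ≤ y := by
  obtain ⟨g, hg⟩ := hT.exists_isChoiceFun
  have hg' := (hg.update hx).update hy
  have := ((hT.2 _ (isChoice_choiceFill hg')).rel_getD_succ j).2 r
    (by rwa [length_getD_choiceFill])
  rwa [getD_getD_choiceFill (hr.trans_le (hT.length_getD_succ_le j)), getD_getD_choiceFill hr,
    Function.update_of_ne (Nat.succ_ne_self j).symm, Function.update_self, Function.update_self,
    Function.update_self, Function.update_self] at this

end choice

def CellLT (A B : Finset ℕ) : Prop := ∀ x ∈ A, ∀ y ∈ B, x < y

def RowLE (c d : List (Finset ℕ)) : Prop :=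
  d.length ≤ c.length ∧ ∀ r < d.length, ∀ x ∈ c.getD r ∅, ∀ y ∈ d.getD r ∅, x ≤ y

structure IsCellwiseSVT (T : List (List (Finset ℕ))) : Prop where
  nonempty : ∀ c ∈ T, ∀ C ∈ c, C.Nonempty
  pairwise_cellLT : ∀ c ∈ T, c.Pairwise CellLT
  isChain_rowLE : T.IsChain RowLE

lemma IsSVT.isCellwiseSVT {T : List (List (Finset ℕ))} (hT : IsSVT T) : IsCellwiseSVT T where
  nonempty := hT.1
  pairwise_cellLT c hc := by
    obtain ⟨j, hj, rfl⟩ := List.getElem_of_mem hc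
    rw [List.pairwise_iff_getElem]
    intro r r' hr hr' hrr' x hx y hy
    have e : T.getD j [] = T[j] := List.getD_eq_getElem _ _ hj
    refine hT.lt_of_mem_cell hrr' (by rwa [e]) ?_ ?_
    · rwa [cell, e, List.getD_eq_getElem _ _ hr]
    · rwa [cell, e, List.getD_eq_getElem _ _ hr']
  isChain_rowLE := by
    rw [List.isChain_iff_getElem]
    intro j hj
    rw [← List.getD_eq_getElem T [] hj, ← List.getD_eq_getElem T [] (Nat.lt_of_succ_lt hj)]
    exact ⟨hT.length_getD_succ_le j, fun r hr x hx y hy => hT.le_of_mem_cell_succ hr hx hy⟩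

lemma IsCellwiseSVT.drop {T : List (List (Finset ℕ))} (hT : IsCellwiseSVT T) (n : ℕ) :
    IsCellwiseSVT (T.drop n) where
  nonempty c hc := hT.nonempty c (List.mem_of_mem_drop hc)
  pairwise_cellLT c hc := hT.pairwise_cellLT c (List.mem_of_mem_drop hc)
  isChain_rowLE := hT.isChain_rowLE.drop n

def numLE (S : Finset ℕ) (b : ℕ) : ℕ := (S.filter (· ≤ b)).card

lemma numLE_mono (S : Finset ℕ) : Monotone (numLE S) := fun _ _ h =>
  Finset.card_le_card fun _ hx => by
    simp only [Finset.mem_filter] at hx ⊢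
    exact ⟨hx.1, hx.2.trans h⟩

lemma exists_mem_le_of_numLE_pos {S : Finset ℕ} {b : ℕ} (h : 0 < numLE S b) :
    ∃ y ∈ S, y ≤ b := by
  obtain ⟨y, hy⟩ := Finset.card_pos.mp h
  exact ⟨y, (Finset.mem_filter.mp hy).1, (Finset.mem_filter.mp hy).2⟩

lemma numLE_insert_of_le {S : Finset ℕ} {m x : ℕ} (hm : m ∉ S) (hmx : m ≤ x) :
    numLE (insert m S) x = numLE S x + 1 := by
  rw [numLE, Finset.filter_insert, if_pos hmx,
    Finset.card_insert_of_notMem fun h => hm (Finset.mem_of_mem_filter m h), numLE]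

section starOne

variable {S : Finset ℕ} {a b y : ℕ}

lemma starOne_of_forall_lt (h : ∀ y ∈ S, a < y) : starOne S a = insert a S := by
  rw [starOne, dif_neg]
  rintro ⟨y, hy⟩
  rw [Finset.mem_filter] at hy
  exact absurd (h y hy.1) (not_lt.mpr hy.2)

lemma exists_starOne_eq_insert_erase (hy : y ∈ S) (hya : y ≤ a) :
    ∃ z ∈ S, z ≤ a ∧ (∀ x ∈ S, x ≤ a → x ≤ z) ∧ starOne S a = insert a (S.erase z) := by
  have hne : (S.filter (· ≤ a)).Nonempty := ⟨y, Finset.mem_filter.mpr ⟨hy, hya⟩⟩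
  obtain ⟨hzS, hza⟩ := Finset.mem_filter.mp ((S.filter (· ≤ a)).max'_mem hne)
  refine ⟨_, hzS, hza, fun x hx hxa => Finset.le_max' _ _ (Finset.mem_filter.mpr ⟨hx, hxa⟩), ?_⟩
  rw [starOne, dif_pos hne]

lemma mem_starOne (S : Finset ℕ) (a : ℕ) : a ∈ starOne S a := by
  unfold starOne
  split <;> exact Finset.mem_insert_self _ _

lemma starOne_subset_insert (S : Finset ℕ) (a : ℕ) : starOne S a ⊆ insert a S := by
  unfold starOne
  split
  · exact Finset.insert_subset_insert _ (Finset.erase_subset _ _)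
  · exact subset_rfl

lemma notMem_erase_of_forall_le {z : ℕ} (hza : z ≤ a) (hmax : ∀ x ∈ S, x ≤ a → x ≤ z) :
    a ∉ S.erase z := fun ha =>
  Finset.ne_of_mem_erase ha (le_antisymm (hmax a (Finset.mem_of_mem_erase ha) le_rfl) hza)

lemma card_starOne (hy : y ∈ S) (hya : y ≤ a) : (starOne S a).card = S.card := by
  obtain ⟨z, hzS, hza, hmax, he⟩ := exists_starOne_eq_insert_erase hy hya
  rw [he, Finset.card_insert_of_notMem (notMem_erase_of_forall_le hza hmax),
    Finset.card_erase_add_one hzS]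

lemma exists_numLE_starOne (hy : y ∈ S) (hya : y ≤ a) :
    ∃ z ∈ S, z ≤ a ∧ (∀ x ∈ S, x ≤ a → x ≤ z) ∧ ∀ b,
      numLE (starOne S a) b + (if z ≤ b then 1 else 0) = numLE S b + (if a ≤ b then 1 else 0) := by
  obtain ⟨z, hzS, hza, hmax, he⟩ := exists_starOne_eq_insert_erase hy hya
  refine ⟨z, hzS, hza, hmax, fun b => ?_⟩
  have hnot : a ∉ (S.filter (· ≤ b)).erase z := fun h =>
    notMem_erase_of_forall_le hza hmax (Finset.erase_subset_erase z (Finset.filter_subset _ S) h)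
  unfold numLE
  rw [he, Finset.filter_insert, Finset.filter_erase]
  by_cases hzb : z ≤ b
  · rw [if_pos hzb, ← Finset.card_erase_add_one (Finset.mem_filter.mpr ⟨hzS, hzb⟩)]
    split_ifs <;> simp [Finset.card_insert_of_notMem hnot]
  · have hab : ¬ a ≤ b := fun h => hzb (hza.trans h)
    rw [Finset.erase_eq_of_notMem (s := S.filter (· ≤ b)) (fun h => hzb (Finset.mem_filter.mp h).2),
      if_neg hab, if_neg hab, if_neg hzb]

lemma numLE_starOne_of_le (hy : y ∈ S) (hya : y ≤ a) (hab : a ≤ b) :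
    numLE (starOne S a) b = numLE S b := by
  obtain ⟨z, -, hza, -, h⟩ := exists_numLE_starOne hy hya
  have := h b
  rwa [if_pos (hza.trans hab), if_pos hab, Nat.add_right_cancel_iff] at this

lemma numLE_starOne_of_lt (hy : y ∈ S) (hby : b < y) (hya : y ≤ a) :
    numLE (starOne S a) b = numLE S b := by
  obtain ⟨z, -, -, hmax, h⟩ := exists_numLE_starOne hy hya
  have := h b
  rwa [if_neg (by have := hmax y hy hya; omega), if_neg (by omega)] at this

lemma min_le_numLE_starOne (hy : y ∈ S) (hya : y ≤ a) (hba : b < a) :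
    min (numLE S b) (numLE S a - 1) ≤ numLE (starOne S a) b := by
  obtain ⟨z, hzS, hza, hmax, h⟩ := exists_numLE_starOne hy hya
  have := h b
  rw [if_neg (show ¬ a ≤ b by omega)] at this
  split_ifs at this with hzb
  · have hab : numLE S a ≤ numLE S b := Finset.card_le_card fun x hx => by
      simp only [Finset.mem_filter] at hx ⊢
      exact ⟨hx.1, (hmax x hx.1 hx.2).trans hzb⟩
    omega
  · omega

lemma starOne_mono {A B : Finset ℕ} (h : A ⊆ B) (a : ℕ) : starOne A a ⊆ starOne B a := by
  by_cases hB : ∃ y ∈ B, y ≤ a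
  swap
  · simp only [not_exists, not_and, not_le] at hB
    rw [starOne_of_forall_lt hB, starOne_of_forall_lt fun y hy => hB y (h hy)]
    exact Finset.insert_subset_insert _ h
  obtain ⟨y, hy, hya⟩ := hB
  obtain ⟨zB, hzB, hzBa, hmaxB, hB⟩ := exists_starOne_eq_insert_erase hy hya
  rw [hB]
  intro x hx
  by_cases hxa : x = a
  · rw [hxa]
    exact Finset.mem_insert_self _ _
  have hxA : x ∈ A := (Finset.mem_insert.mp (starOne_subset_insert A a hx)).resolve_left hxa
  refine Finset.mem_insert_of_mem (Finset.mem_erase.mpr ⟨?_, h hxA⟩)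
  rintro rfl
  -- `zB ∈ A` is then also the element that `starOne A a` erases
  obtain ⟨zA, hzA, hzAa, hmaxA, hA⟩ := exists_starOne_eq_insert_erase hxA hzBa
  have hzA : zA = x := le_antisymm (hmaxB zA (h hzA) hzAa) (hmaxA x hxA hzBa)
  rw [hA, hzA] at hx
  exact Finset.notMem_erase x A ((Finset.mem_insert.mp hx).resolve_left hxa)

lemma starWord_mono {A B : Finset ℕ} (h : A ⊆ B) (w : List ℕ) : starWord A w ⊆ starWord B w := by
  induction w generalizing A B with
  | nil => exact h
  | cons a w ih => exact ih (starOne_mono h a)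

end starOne

section starWord

variable {S : Finset ℕ} {w : List ℕ} {a b m y : ℕ}

lemma starWord_cons (S : Finset ℕ) (a : ℕ) (w : List ℕ) :
    starWord S (a :: w) = starWord (starOne S a) w := rfl

lemma starWord_append (S : Finset ℕ) (v w : List ℕ) :
    starWord S (v ++ w) = starWord (starWord S v) w := List.foldl_append

lemma starWord_subset_union (S : Finset ℕ) (w : List ℕ) : starWord S w ⊆ S ∪ w.toFinset := by
  induction w generalizing S with
  | nil => exact Finset.subset_union_left
  | cons a w ih =>
    calc starWord (starOne S a) w ⊆ starOne S a ∪ w.toFinset := ih _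
      _ ⊆ insert a S ∪ w.toFinset :=
        Finset.union_subset_union (starOne_subset_insert S a) subset_rfl
      _ = S ∪ (a :: w).toFinset := by
        ext
        simp only [Finset.mem_union, Finset.mem_insert, List.toFinset_cons]
        tauto

lemma card_starWord_sorted (hw : w.Pairwise (· ≤ ·)) (hy : y ∈ S) (hyw : ∀ x ∈ w, y ≤ x) :
    (starWord S w).card = S.card := by
  induction w generalizing S y with
  | nil => rfl
  | cons a w ih =>
    rw [List.pairwise_cons] at hw
    rw [starWord_cons, ih hw.2 (mem_starOne S a) hw.1, card_starOne hy (hyw a List.mem_cons_self)]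

lemma numLE_starWord_sorted_of_ge (hw : w.Pairwise (· ≤ ·)) (hy : y ∈ S)
    (hyw : ∀ x ∈ w, y ≤ x) (hwb : ∀ x ∈ w, x ≤ b) : numLE (starWord S w) b = numLE S b := by
  induction w generalizing S y with
  | nil => rfl
  | cons a w ih =>
    rw [List.pairwise_cons] at hw
    rw [starWord_cons, ih hw.2 (mem_starOne S a) hw.1 fun x hx => hwb x (List.mem_cons_of_mem a hx),
      numLE_starOne_of_le hy (hyw a List.mem_cons_self) (hwb a List.mem_cons_self)]

lemma numLE_starWord_sorted_of_lt (hw : w.Pairwise (· ≤ ·)) (hy : y ∈ S) (hby : b < y)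
    (hyw : ∀ x ∈ w, y ≤ x) : numLE (starWord S w) b = numLE S b := by
  induction w generalizing S y with
  | nil => rfl
  | cons a w ih =>
    rw [List.pairwise_cons] at hw
    have hya := hyw a List.mem_cons_self
    rw [starWord_cons, ih hw.2 (mem_starOne S a) (hby.trans_le hya) hw.1,
      numLE_starOne_of_lt hy hby hya]

/-- Only the first letter `a` of a sorted word can lower a count at `b < a`; the later ones
replace elements `≥ a`. -/
lemma min_le_numLE_starWord_sorted (hw : w.Pairwise (· ≤ ·)) (ha : a ∈ w) (haw : ∀ x ∈ w, a ≤ x)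
    (hy : y ∈ S) (hya : y ≤ a) (hba : b < a) :
    min (numLE S b) (numLE S a - 1) ≤ numLE (starWord S w) b := by
  cases w with
  | nil => exact absurd ha List.not_mem_nil
  | cons a' w =>
    rw [List.pairwise_cons] at hw
    have ha' : a' = a := by
      rcases List.mem_cons.mp ha with h | h
      · exact h.symm
      · exact le_antisymm (hw.1 a h) (haw a' List.mem_cons_self)
    subst ha'
    rw [starWord_cons, numLE_starWord_sorted_of_lt hw.2 (mem_starOne S a') hba hw.1]
    exact min_le_numLE_starOne hy hya hba

lemma starWord_insert_of_forall_lt (hw : (a :: w).Pairwise (· < ·))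
    (hS : ∀ y ∈ S, ∀ x ∈ a :: w, x < y) (hm : m ∈ a :: w) (hmw : ∀ x ∈ a :: w, x ≤ m) :
    starWord (insert a S) w = insert m S := by
  induction w generalizing a with
  | nil => rw [List.mem_singleton.mp hm]; rfl
  | cons c w ih =>
    have hac : a < c := List.rel_of_pairwise_cons hw List.mem_cons_self
    have haS : a ∉ S := fun h => lt_irrefl a (hS a h a List.mem_cons_self)
    obtain ⟨z, hz, hzc, hmax, he⟩ :=
      exists_starOne_eq_insert_erase (Finset.mem_insert_self a S) hac.le
    have hza : z = a := by
      rcases Finset.mem_insert.mp hz with h | h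
      · exact h
      · exact absurd (hS z h c (List.mem_cons_of_mem a List.mem_cons_self)) (not_lt.mpr hzc)
    rw [starWord_cons, he, hza, Finset.erase_insert haS]
    have hma : m ≠ a := fun h => by
      have := hmw c (List.mem_cons_of_mem a List.mem_cons_self)
      omega
    exact ih (List.pairwise_cons.mp hw).2 (fun y hy x hx => hS y hy x (List.mem_cons_of_mem a hx))
      ((List.mem_cons.mp hm).resolve_left hma) fun x hx => hmw x (List.mem_cons_of_mem a hx)

lemma starWord_of_forall_lt (hw : w.Pairwise (· < ·)) (hS : ∀ y ∈ S, ∀ x ∈ w, x < y)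
    (hm : m ∈ w) (hmw : ∀ x ∈ w, x ≤ m) : starWord S w = insert m S := by
  cases w with
  | nil => exact absurd hm List.not_mem_nil
  | cons a w =>
    rw [starWord_cons, starOne_of_forall_lt fun y hy => hS y hy a List.mem_cons_self]
    exact starWord_insert_of_forall_lt hw hS hm hmw

end starWord

lemma mem_cellWord {C : Finset ℕ} {x : ℕ} : x ∈ cellWord C ↔ x ∈ C := Finset.mem_sort _

lemma cellWord_pairwise_le (C : Finset ℕ) : (cellWord C).Pairwise (· ≤ ·) :=
  Finset.pairwise_sort _ _

lemma starWord_cellWord_of_forall_lt {S C : Finset ℕ} (hC : C.Nonempty)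
    (hS : ∀ y ∈ S, ∀ x ∈ C, x < y) : starWord S (cellWord C) = insert (C.max' hC) S :=
  starWord_of_forall_lt (Finset.sortedLT_sort C).pairwise
    (fun y hy x hx => hS y hy x (mem_cellWord.mp hx)) (mem_cellWord.mpr (C.max'_mem hC))
    fun x hx => C.le_max' x (mem_cellWord.mp hx)

def colWord (c : List (Finset ℕ)) : List ℕ := (c.reverse.map cellWord).flatten

lemma colWord_cons (C : Finset ℕ) (cs : List (Finset ℕ)) :
    colWord (C :: cs) = colWord cs ++ cellWord C := by
  simp [colWord]

lemma mem_colWord {c : List (Finset ℕ)} {x : ℕ} : x ∈ colWord c ↔ ∃ D ∈ c, x ∈ D := by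
  simp [colWord, mem_cellWord]

lemma svtWord_cons (c : List (Finset ℕ)) (T : List (List (Finset ℕ))) :
    svtWord (c :: T) = colWord c ++ svtWord T := rfl

section firstColumn

variable {C : Finset ℕ} {c cs : List (Finset ℕ)}

lemma lt_of_mem_starWord_empty_colWord (hc : (C :: cs).Pairwise CellLT) {x y : ℕ} (hx : x ∈ C)
    (hy : y ∈ starWord ∅ (colWord cs)) : x < y := by
  have hy' := starWord_subset_union ∅ (colWord cs) hy
  rw [Finset.empty_union, List.mem_toFinset, mem_colWord] at hy'
  obtain ⟨D, hD, hyD⟩ := hy'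
  exact List.rel_of_pairwise_cons hc hD x hx y hyD

/-- Every entry of `C` lies below the set obtained from the lower cells, so the first letter of
`C` is inserted and each later one replaces its predecessor. -/
lemma starWord_empty_colWord_cons (hC : C.Nonempty) (hc : (C :: cs).Pairwise CellLT) :
    starWord ∅ (colWord (C :: cs)) = insert (C.max' hC) (starWord ∅ (colWord cs)) := by
  rw [colWord_cons, starWord_append]
  exact starWord_cellWord_of_forall_lt hC fun y hy x hx =>
    lt_of_mem_starWord_empty_colWord hc hx hy

lemma card_starWord_empty_colWord (hne : ∀ C ∈ c, C.Nonempty) (hc : c.Pairwise CellLT) :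
    (starWord ∅ (colWord c)).card = c.length := by
  induction c with
  | nil => rfl
  | cons C cs ih =>
    have hC := hne C List.mem_cons_self
    rw [starWord_empty_colWord_cons hC hc, Finset.card_insert_of_notMem
      fun h => lt_irrefl _ (lt_of_mem_starWord_empty_colWord hc (C.max'_mem hC) h),
      ih (fun D hD => hne D (List.mem_cons_of_mem C hD)) (List.pairwise_cons.mp hc).2,
      List.length_cons]

end firstColumn

/-- Since `r + 1 + d ≤ numLE S x` says that the `(r + d)`-th smallest element of `S`
(counting from `0`) is at most `x`, `LeMinEntries S d c` compares it with the least entry of the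
cell `c[r]`, and `LeMaxEntries S d c` with the largest. -/
def LeMinEntries (S : Finset ℕ) (d : ℕ) (c : List (Finset ℕ)) : Prop :=
  ∀ r < c.length, ∀ x ∈ c.getD r ∅, r + 1 + d ≤ numLE S x

def LeMaxEntries (S : Finset ℕ) (d : ℕ) (c : List (Finset ℕ)) : Prop :=
  ∀ r < c.length, ∃ x ∈ c.getD r ∅, r + 1 + d ≤ numLE S x

section entries

variable {S S' : Finset ℕ} {C : Finset ℕ} {c cs : List (Finset ℕ)} {d : ℕ}

lemma LeMinEntries.tail (h : LeMinEntries S d (C :: cs)) : LeMinEntries S (d + 1) cs :=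
  fun r hr x hx => by
    have := h (r + 1) (by simpa using hr) x (by simpa using hx)
    omega

lemma LeMinEntries.head (h : LeMinEntries S d (C :: cs)) {x : ℕ} (hx : x ∈ C) :
    d + 1 ≤ numLE S x := by
  have := h 0 (by simp) x (by simpa using hx)
  omega

lemma LeMaxEntries.cons (hC : ∃ x ∈ C, d + 1 ≤ numLE S x) (h : LeMaxEntries S (d + 1) cs) :
    LeMaxEntries S d (C :: cs)
  | 0, _ => by simpa [Nat.add_comm 1 d] using hC
  | r + 1, hr => by
    obtain ⟨x, hx, hxS⟩ := h r (by simpa using hr)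
    exact ⟨x, by simpa using hx, by omega⟩

lemma LeMaxEntries.of_add_le {k : ℕ} (h : LeMaxEntries S d c)
    (hS : ∀ D ∈ c, ∀ x ∈ D, numLE S x + k ≤ numLE S' x) : LeMaxEntries S' (d + k) c :=
  fun r hr => by
    obtain ⟨x, hx, hxS⟩ := h r hr
    exact ⟨x, hx, by have := hS _ (getD_mem hr) x hx; omega⟩

lemma leMaxEntries_starWord_empty_colWord (hne : ∀ C ∈ c, C.Nonempty) (hc : c.Pairwise CellLT) :
    LeMaxEntries (starWord ∅ (colWord c)) 0 c := by
  induction c with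
  | nil => exact fun r hr => absurd hr (Nat.not_lt_zero r)
  | cons C cs ih =>
    have hC := hne C List.mem_cons_self
    have hm : C.max' hC ∉ starWord ∅ (colWord cs) :=
      fun h => lt_irrefl _ (lt_of_mem_starWord_empty_colWord hc (C.max'_mem hC) h)
    rw [starWord_empty_colWord_cons hC hc]
    refine LeMaxEntries.cons ⟨C.max' hC, C.max'_mem hC, by rw [numLE_insert_of_le hm le_rfl]; omega⟩
      ((ih (fun D hD => hne D (List.mem_cons_of_mem C hD)) (List.pairwise_cons.mp hc).2).of_add_le
        fun D hD x hx => (numLE_insert_of_le hm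
          (List.rel_of_pairwise_cons hc hD _ (C.max'_mem hC) x hx).le).ge)

end entries

section column

variable {S : Finset ℕ} {c : List (Finset ℕ)} {d : ℕ}

lemma min_le_numLE_starWord_colWord (hne : ∀ C ∈ c, C.Nonempty) (hc : c.Pairwise CellLT)
    (hS : LeMinEntries S d c) {b : ℕ} (hb : ∀ D ∈ c, ∀ x ∈ D, b < x) :
    min (numLE S b) d ≤ numLE (starWord S (colWord c)) b := by
  induction c generalizing d b with
  | nil => exact min_le_left _ _
  | cons C cs ih =>
    have hC := hne C List.mem_cons_self
    have hne' := fun D hD => hne D (List.mem_cons_of_mem C hD)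
    have hc' := (List.pairwise_cons.mp hc).2
    have hb' := ih hne' hc' hS.tail fun D hD x hx => hb D (List.mem_cons_of_mem C hD) x hx
    have ha := ih hne' hc' hS.tail (b := C.min' hC)
      fun D hD x hx => List.rel_of_pairwise_cons hc hD _ (C.min'_mem hC) x hx
    have haS := hS.head (C.min'_mem hC)
    have hpos : 0 < numLE (starWord S (colWord cs)) (C.min' hC) := by omega
    obtain ⟨y, hy, hya⟩ := exists_mem_le_of_numLE_pos hpos
    have hlast := min_le_numLE_starWord_sorted (cellWord_pairwise_le C)
      (mem_cellWord.mpr (C.min'_mem hC)) (fun x hx => C.min'_le x (mem_cellWord.mp hx)) hy hya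
      (hb C List.mem_cons_self _ (C.min'_mem hC))
    rw [colWord_cons, starWord_append]
    omega

lemma succ_le_numLE_starWord_colWord_min' {C : Finset ℕ} {cs : List (Finset ℕ)}
    (hne : ∀ D ∈ C :: cs, D.Nonempty) (hc : (C :: cs).Pairwise CellLT)
    (hS : LeMinEntries S d (C :: cs)) (hC : C.Nonempty) :
    d + 1 ≤ numLE (starWord S (colWord cs)) (C.min' hC) := by
  have := min_le_numLE_starWord_colWord (fun D hD => hne D (List.mem_cons_of_mem C hD))
    (List.pairwise_cons.mp hc).2 hS.tail
    fun D hD x hx => List.rel_of_pairwise_cons hc hD _ (C.min'_mem hC) x hx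
  have := hS.head (C.min'_mem hC)
  omega

lemma card_starWord_colWord (hne : ∀ C ∈ c, C.Nonempty) (hc : c.Pairwise CellLT)
    (hS : LeMinEntries S d c) : (starWord S (colWord c)).card = S.card := by
  induction c generalizing d with
  | nil => rfl
  | cons C cs ih =>
    have hC := hne C List.mem_cons_self
    obtain ⟨y, hy, hya⟩ := exists_mem_le_of_numLE_pos
      ((Nat.succ_pos d).trans_le (succ_le_numLE_starWord_colWord_min' hne hc hS hC))
    rw [colWord_cons, starWord_append,
      card_starWord_sorted (cellWord_pairwise_le C) hy
        fun x hx => hya.trans (C.min'_le x (mem_cellWord.mp hx)),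
      ih (fun D hD => hne D (List.mem_cons_of_mem C hD)) (List.pairwise_cons.mp hc).2 hS.tail]

lemma leMaxEntries_starWord_colWord (hne : ∀ C ∈ c, C.Nonempty) (hc : c.Pairwise CellLT)
    (hS : LeMinEntries S d c) : LeMaxEntries (starWord S (colWord c)) d c := by
  induction c generalizing d with
  | nil => exact fun r hr => absurd hr (Nat.not_lt_zero r)
  | cons C cs ih =>
    have hC := hne C List.mem_cons_self
    set S' := starWord S (colWord cs)
    have ha := succ_le_numLE_starWord_colWord_min' hne hc hS hC
    obtain ⟨y, hy, hya⟩ := exists_mem_le_of_numLE_pos ((Nat.succ_pos d).trans_le ha)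
    have hyC : ∀ x ∈ cellWord C, y ≤ x := fun x hx => hya.trans (C.min'_le x (mem_cellWord.mp hx))
    have hkeep : ∀ b, (∀ x ∈ C, x ≤ b) → numLE (starWord S' (cellWord C)) b = numLE S' b :=
      fun b hb => numLE_starWord_sorted_of_ge (cellWord_pairwise_le C) hy hyC
        fun x hx => hb x (mem_cellWord.mp hx)
    rw [colWord_cons, starWord_append]
    refine LeMaxEntries.cons ⟨C.max' hC, C.max'_mem hC, ?_⟩
      ((ih (fun D hD => hne D (List.mem_cons_of_mem C hD)) (List.pairwise_cons.mp hc).2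
        hS.tail).of_add_le (k := 0) fun D hD x hx => (hkeep x fun z hz =>
          (List.rel_of_pairwise_cons hc hD z hz x hx).le).ge)
    rw [hkeep _ fun x hx => C.le_max' x hx]
    exact ha.trans (numLE_mono S' (C.min'_le _ (C.max'_mem hC)))

end column

lemma LeMaxEntries.leMinEntries {S : Finset ℕ} {p c : List (Finset ℕ)} (h : LeMaxEntries S 0 p)
    (hpc : RowLE p c) : LeMinEntries S 0 c := fun r hr y hy => by
  obtain ⟨x, hx, hxS⟩ := h r (hr.trans_le hpc.1)
  exact hxS.trans (numLE_mono S (hpc.2 r hr x hx y hy))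

lemma card_starWord_svtWord {S : Finset ℕ} {p : List (Finset ℕ)} {T : List (List (Finset ℕ))}
    (hT : IsCellwiseSVT (p :: T)) (hS : LeMaxEntries S 0 p) :
    (starWord S (svtWord T)).card = S.card := by
  induction T generalizing p S with
  | nil => rfl
  | cons c T ih =>
    have hc := hS.leMinEntries (List.isChain_cons_cons.mp hT.isChain_rowLE).1
    have hne := hT.nonempty c (by simp)
    have hcl := hT.pairwise_cellLT c (by simp)
    rw [svtWord_cons, starWord_append, ih (hT.drop 1) (leMaxEntries_starWord_colWord hne hcl hc),
      card_starWord_colWord hne hcl hc]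

lemma IsCellwiseSVT.card_svtKeyCol {T : List (List (Finset ℕ))} (hT : IsCellwiseSVT T) (j : ℕ) :
    (svtKeyCol T j).card = (T.getD j []).length := by
  rcases lt_or_ge j T.length with hj | hj
  · have hT' := hT.drop j
    rw [List.drop_eq_getElem_cons hj] at hT'
    have hne := hT'.nonempty _ List.mem_cons_self
    have hc := hT'.pairwise_cellLT _ List.mem_cons_self
    rw [svtKeyCol, List.drop_eq_getElem_cons hj, svtWord_cons, starWord_append,
      card_starWord_svtWord hT' (leMaxEntries_starWord_empty_colWord hne hc),
      card_starWord_empty_colWord hne hc, List.getD_eq_getElem _ _ hj]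
  · rw [svtKeyCol, List.drop_eq_nil_of_le hj, List.getD_eq_default _ _ hj]
    rfl

lemma svtKeyCol_succ_subset (T : List (List (Finset ℕ))) (j : ℕ) :
    svtKeyCol T (j + 1) ⊆ svtKeyCol T j := by
  rcases lt_or_ge j T.length with hj | hj
  · rw [svtKeyCol, svtKeyCol, List.drop_eq_getElem_cons hj, svtWord_cons, starWord_append]
    exact starWord_mono (Finset.empty_subset _) _
  · rw [svtKeyCol, List.drop_eq_nil_of_le (by omega)]
    exact Finset.empty_subset _

lemma ithSmall_le_ithSmall_of_subset {A B : Finset ℕ} (h : B ⊆ A) {k : ℕ} (hk : k < B.card) :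
    ithSmall A k ≤ ithSmall B k := by
  have hsub : List.Sublist (B.sort (· ≤ ·)) (A.sort (· ≤ ·)) :=
    List.sublist_of_subperm_of_pairwise
      (List.subperm_of_subset (B.sort_nodup _) fun x hx => by simpa using h (by simpa using hx))
      (B.pairwise_sort _) (A.pairwise_sort _)
  obtain ⟨f, hf⟩ := List.sublist_iff_exists_orderEmbedding_getElem?_eq.mp hsub
  have hkB : k < (B.sort (· ≤ ·)).length := by simpa using hk
  obtain ⟨hfA, hfk⟩ :=
    List.getElem?_eq_some_iff.mp ((List.getElem?_eq_getElem hkB).symm.trans (hf k)).symm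
  have hkf : k ≤ f k := f.strictMono.id_le k
  rw [ithSmall, ithSmall, List.getD_eq_getElem _ _ (hkf.trans_lt hfA), List.getD_eq_getElem _ _ hkB,
    ← hfk]
  exact (A.pairwise_sort (· ≤ ·)).sortedLE.getElem_le_getElem_of_le hkf

lemma isSSYTFill_map_sort {Ks : List (Finset ℕ)} (h : Ks.IsChain fun A B => B ⊆ A) :
    IsSSYTFill (Ks.map (·.sort (· ≤ ·))) := by
  refine ⟨fun c hc => ?_, ?_⟩
  · obtain ⟨K, -, rfl⟩ := List.mem_map.mp hc
    exact (Finset.sortedLT_sort K).isChain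
  · refine List.isChain_map_of_isChain _ (fun A B hBA => ⟨?_, fun r hr => ?_⟩) h
    · simpa using Finset.card_le_card hBA
    · exact ithSmall_le_ithSmall_of_subset hBA (by simpa using hr)

/-- **Corollary (`T_max` is a key).** For every set-valued tableau `T` of
partition shape, the tableau `T_max` (whose column `j` is `svtKeyCol T j`, the
entrywise maximum of the right keys of the choices of `T`) is a key: it is a
semistandard Young tableau of the same (partition) shape as `T`, and every
entry of column `j+1` also appears in column `j`. -/
theorem tmax_is_key (T : List (List (Finset ℕ))) (hT : IsSVT T) :
    (∀ j, (svtKeyCol T j).card = (T.getD j []).length) ∧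
    (∀ j, svtKeyCol T (j+1) ⊆ svtKeyCol T j) ∧
    IsSSYTFill ((List.range T.length).map (fun j => (svtKeyCol T j).sort (· ≤ ·))) := by
  refine ⟨hT.isCellwiseSVT.card_svtKeyCol, svtKeyCol_succ_subset T, ?_⟩
  have hchain : ((List.range T.length).map (svtKeyCol T)).IsChain fun A B => B ⊆ A :=
    List.isChain_map_of_isChain _ (fun j _ h => h ▸ svtKeyCol_succ_subset T j)
      ((List.isChain_range _ _).mpr fun _ _ => rfl)
  simpa only [List.map_map, Function.comp_def] using isSSYTFill_map_sort hchain
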